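/- arXiv:2204.07028 — 2 statements merged into one kernel-verified Lean document; each statement's English description precedes it below -/
import Mathlib

section
/- Existence of a root for the SKR equation: for u ∈ ℝ^C with a unique strict maximum and any target entropy E with 0 < E < log₂ C, there exists θ* > 0 such that H(ψ(θ*; u)) = E, where H is the base-2 Shannon entropy of the temperature-scaled softmax. -/
/-!
The softmax `ψ(θ; u)` is continuous in `θ > 0`. As `θ → ∞` it tends to the uniform
distribution, of entropy `log₂ C`; as `θ → 0⁺` it concentrates on the unique maximiser,
a point mass of entropy `0`. Since entropy is a continuous function of the distribution
(`x ↦ -x log x` is continuous at `0`), the intermediate value theorem on the connected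
set `(0, ∞)` produces `θ*`.
-/

open Real Filter Topology Set

variable {ι : Type*} [Fintype ι]

noncomputable def softmax (u : ι → ℝ) (θ : ℝ) (i : ι) : ℝ :=
  exp (u i / θ) / ∑ j, exp (u j / θ)

noncomputable def entropyBits (p : ι → ℝ) : ℝ :=
  -∑ i, p i * logb 2 (p i)

lemma entropyBits_eq_sum_negMulLog (p : ι → ℝ) :
    entropyBits p = (∑ i, negMulLog (p i)) / log 2 := by
  simp only [entropyBits, negMulLog, logb, Finset.sum_div, ← Finset.sum_neg_distrib]
  exact Finset.sum_congr rfl fun i _ => by ring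

lemma continuous_entropyBits : Continuous (entropyBits : (ι → ℝ) → ℝ) := by
  simp only [funext entropyBits_eq_sum_negMulLog]
  fun_prop

lemma entropyBits_uniform [Nonempty ι] :
    entropyBits (fun _ : ι => (Fintype.card ι : ℝ)⁻¹) = logb 2 (Fintype.card ι) := by
  have hcard : (Fintype.card ι : ℝ) ≠ 0 := Nat.cast_ne_zero.mpr Fintype.card_ne_zero
  rw [entropyBits_eq_sum_negMulLog, logb]
  simp only [Finset.sum_const, Finset.card_univ, nsmul_eq_mul, negMulLog, log_inv]
  field_simp

lemma entropyBits_single [DecidableEq ι] (m : ι) : entropyBits (Pi.single m (1 : ℝ)) = 0 := by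
  rw [entropyBits_eq_sum_negMulLog, Finset.sum_eq_zero fun i _ => ?_, zero_div]
  rcases eq_or_ne i m with rfl | hi <;> simp [*]

lemma softmax_sub_const (u : ι → ℝ) (c θ : ℝ) :
    softmax (fun i => u i - c) θ = softmax u θ := by
  have hexp : ∀ i, exp ((u i - c) / θ) = exp (u i / θ) * exp (-(c / θ)) := fun i => by
    rw [← exp_add, sub_div, sub_eq_add_neg]
  funext i
  simp only [softmax, hexp, ← Finset.sum_mul]
  exact mul_div_mul_right _ _ (exp_ne_zero _)

lemma continuousOn_softmax [Nonempty ι] (u : ι → ℝ) : ContinuousOn (softmax u) (Ioi 0) := by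
  refine continuousOn_pi.mpr fun i => ?_
  have hdiv : ∀ j, ContinuousOn (fun θ : ℝ => u j / θ) (Ioi 0) := fun j =>
    continuousOn_const.div continuousOn_id fun θ hθ => ne_of_gt hθ
  exact ((hdiv i).rexp).div (continuousOn_finsetSum _ fun j _ => (hdiv j).rexp)
    fun θ _ => (Finset.sum_pos (fun j _ => exp_pos _) Finset.univ_nonempty).ne'

lemma tendsto_softmax_atTop [Nonempty ι] (u : ι → ℝ) :
    Tendsto (softmax u) atTop (𝓝 fun _ => (Fintype.card ι : ℝ)⁻¹) := by
  have hexp : ∀ i, Tendsto (fun θ => exp (u i / θ)) atTop (𝓝 1) := fun i => by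
    simpa using (tendsto_const_nhds.div_atTop tendsto_id).rexp
  have hsum : Tendsto (fun θ => ∑ j, exp (u j / θ)) atTop (𝓝 (Fintype.card ι)) := by
    simpa using tendsto_finsetSum Finset.univ fun j _ => hexp j
  refine tendsto_pi_nhds.mpr fun i => ?_
  simpa [softmax, Pi.div_def] using (hexp i).div hsum (Nat.cast_ne_zero.mpr Fintype.card_ne_zero)

lemma tendsto_softmax_nhdsGT_zero [DecidableEq ι] (u : ι → ℝ) (m : ι)
    (hm : ∀ i, i ≠ m → u i < u m) :
    Tendsto (softmax u) (𝓝[>] 0) (𝓝 (Pi.single m 1)) := by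
  -- after shifting by the maximum, every other exponent tends to `-∞`
  rw [← funext (softmax_sub_const u (u m))]
  have hexp : ∀ i, Tendsto (fun θ => exp ((u i - u m) / θ)) (𝓝[>] 0)
      (𝓝 ((Pi.single m 1 : ι → ℝ) i)) := fun i => by
    rcases eq_or_ne i m with rfl | hi
    · simp
    · rw [Pi.single_eq_of_ne hi]
      exact tendsto_exp_atBot.comp <|
        (tendsto_const_mul_atBot_of_neg (sub_neg.mpr (hm i hi))).mpr tendsto_inv_nhdsGT_zero
  have hsum : Tendsto (fun θ => ∑ j, exp ((u j - u m) / θ)) (𝓝[>] 0) (𝓝 1) := by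
    simpa using tendsto_finsetSum Finset.univ fun j _ => hexp j
  refine tendsto_pi_nhds.mpr fun i => ?_
  simpa [softmax, Pi.div_def] using (hexp i).div hsum one_ne_zero

theorem skr_root_exists_general (C : ℕ) (u : Fin C → ℝ)
    (m : Fin C) (hm : ∀ i, i ≠ m → u i < u m)
    (E : ℝ) (hE1 : 0 < E) (hE2 : E < Real.logb 2 (C : ℝ)) :
    ∃ θ : ℝ, 0 < θ ∧
      -∑ i, (Real.exp (u i / θ) / (∑ j, Real.exp (u j / θ))) *
          Real.logb 2 (Real.exp (u i / θ) / (∑ j, Real.exp (u j / θ))) = E := by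
  have : Nonempty (Fin C) := ⟨m⟩
  have hcold : Tendsto (entropyBits ∘ softmax u) (𝓝[>] 0) (𝓝 0) := by
    simpa only [entropyBits_single] using
      (continuous_entropyBits.tendsto _).comp (tendsto_softmax_nhdsGT_zero u m hm)
  have hhot : Tendsto (entropyBits ∘ softmax u) atTop (𝓝 (logb 2 C)) := by
    have := (continuous_entropyBits.tendsto _).comp (tendsto_softmax_atTop u)
    rwa [entropyBits_uniform, Fintype.card_fin] at this
  obtain ⟨θ, hθ, hθE⟩ := isPreconnected_Ioi.intermediate_value_Ioo
    (le_principal_iff.mpr self_mem_nhdsWithin)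
    (le_principal_iff.mpr (Ioi_mem_atTop 0))
    (continuous_entropyBits.comp_continuousOn (continuousOn_softmax u)) hcold hhot ⟨hE1, hE2⟩
  exact ⟨θ, hθ, hθE⟩

/-- Existence of a root for the SKR equation. -/
theorem skr_root_exists (C : ℕ) (hC : 2 ≤ C) (u : Fin C → ℝ)
    (m : Fin C) (hm : ∀ i, i ≠ m → u i < u m)
    (E : ℝ) (hE1 : 0 < E) (hE2 : E < Real.logb 2 (C : ℝ)) :
    ∃ θ : ℝ, 0 < θ ∧
      -∑ i, (Real.exp (u i / θ) / (∑ j, Real.exp (u j / θ))) *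
          Real.logb 2 (Real.exp (u i / θ) / (∑ j, Real.exp (u j / θ))) = E :=
  skr_root_exists_general C u m hm E hE1 hE2
end

section
/- Positivity of the KKR scaling parameter: suppose σ: ℝ → ℝ is continuous, monotonically increasing, and strictly positive, and v ∈ ℝ^C is a probability vector with maximum v_m whose maximum is not attained at all coordinates (so v_j < v_m for some j). If T > 1/C and t ∈ ℝ \ {0} satisfies σ(1/t)/∑_{j=1}^C σ(v_j/(t·v_m)) = T, then t > 0. -/
open Real Finset

/-- Positivity of the KKR scaling parameter for a general kernel function. -/
theorem kkr_scaling_param_pos (C : ℕ) (hC : 2 ≤ C) (v : Fin C → ℝ)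
    (hsum : ∑ i, v i = 1) (hnonneg : ∀ i, 0 ≤ v i)
    (m : Fin C) (hmax : ∀ i, v i ≤ v m) (hstrict : ∃ j, v j < v m)
    (σ : ℝ → ℝ) (hcont : Continuous σ) (hmono : Monotone σ) (hpos : ∀ x, 0 < σ x)
    (T : ℝ) (hT1 : 1 / (C : ℝ) < T) (hT2 : T < 1)
    (t : ℝ) (ht : t ≠ 0)
    (heq : σ (1 / t) / (∑ j, σ (v j / (t * v m))) = T) :
    0 < t := by
  by_contra h
  push_neg at h
  have htneg : t < 0 := lt_of_le_of_ne h ht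
  have hvm : 0 < v m := by
    by_contra hvm
    push_neg at hvm
    have hz : ∀ i, v i = 0 := fun i => le_antisymm (le_trans (hmax i) hvm) (hnonneg i)
    simp [hz] at hsum
  have hden : t * v m < 0 := mul_neg_of_neg_of_pos htneg hvm
  have hterm : ∀ j, σ (1 / t) ≤ σ (v j / (t * v m)) := by
    intro j
    apply hmono
    have hne : t * v m ≠ 0 := ne_of_lt hden
    have hdiff : v j / (t * v m) - 1 / t = (v j - v m) / (t * v m) := by
      field_simp
    have hnn : 0 ≤ (v j - v m) / (t * v m) := by
      exact div_nonneg_of_nonpos (by linarith [hmax j]) (le_of_lt hden)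
    linarith
  have hsumge : (C : ℝ) * σ (1 / t) ≤ ∑ j, σ (v j / (t * v m)) := by
    calc (C : ℝ) * σ (1 / t) = ∑ _j : Fin C, σ (1 / t) := by
          simp [mul_comm]
      _ ≤ ∑ j, σ (v j / (t * v m)) := Finset.sum_le_sum fun j _ => hterm j
  have hCpos : (0 : ℝ) < C := by positivity
  have hsumpos : 0 < ∑ j, σ (v j / (t * v m)) :=
    lt_of_lt_of_le (mul_pos (by positivity) (hpos _)) hsumge
  have : T ≤ 1 / (C : ℝ) := by
    rw [← heq, div_le_div_iff₀ hsumpos hCpos]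
    linarith [hsumge]
  linarith
end
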